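/- Let k ≥ 2 be an integer. The functions η_i(t) = (1/(2√2)) ln(1152 t) − (1/√2) ln[(i−1)(k−i+1)/2], for i = 2, …, k, satisfy, for all t > 0 and all i = 2, …, k, the system (2√2/3) η_i'(t) = 384 { −2 e^{−2√2 η_{i−1}(t)} + 4 e^{−2√2 η_i(t)} − 2 e^{−2√2 η_{i+1}(t)} − e^{−√2(η_i(t) + η_{i+1}(t))} + e^{−√2(η_{i−1}(t) + η_{i−2}(t))} − e^{−√2(η_i(t) + η_{i−1}(t))} + e^{−√2(η_{i+1}(t) + η_{i+2}(t))} }, where every term containing η_j with j ∉ {2, …, k} is replaced by 0 (corresponding to the conventions η_0 = η_1 = η_{k+1} = η_{k+2} = +∞). -/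

import Mathlib

/-!
With `c_j = (j-1)(k-j+1)/2` one has `e^{-√2 η_j(t)} = c_j / √(1152 t)`, so every exponential
in the system equals `c_a c_b / (1152 t)`, while the left-hand side is `1/(3t) = 384/(1152 t)`.
The system thus reduces to a polynomial identity in `i` and `k` for the `c_j`. The truncation
convention costs nothing: `c_1 = c_{k+1} = 0`, and each omitted term carries one of these factors.
-/

open Real

/-- The explicit gap functions
`η_i(t) = (1/(2√2)) ln(1152 t) − (1/√2) ln[(i−1)(k−i+1)/2]`. -/
noncomputable def eta0 (k i : ℕ) (t : ℝ) : ℝ :=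
  (1 / (2 * Real.sqrt 2)) * Real.log (1152 * t)
    - (1 / Real.sqrt 2) * Real.log (((i : ℝ) - 1) * ((k : ℝ) - (i : ℝ) + 1) / 2)

noncomputable def gapCoeff (k x : ℝ) : ℝ := (x - 1) * (k - x + 1) / 2

lemma gapCoeff_pos {k x : ℝ} (h1 : 1 < x) (h2 : x < k + 1) : 0 < gapCoeff k x :=
  div_pos (mul_pos (sub_pos.2 h1) (by linarith)) two_pos

lemma gapCoeff_natCast_pos {k j : ℕ} (h1 : 2 ≤ j) (h2 : j ≤ k) : 0 < gapCoeff k j :=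
  gapCoeff_pos (by exact_mod_cast h1) (by exact_mod_cast Nat.lt_succ_of_le h2)

lemma gapCoeff_one (k : ℝ) : gapCoeff k 1 = 0 := by simp [gapCoeff]

lemma gapCoeff_add_one_self (k : ℝ) : gapCoeff k (k + 1) = 0 := by simp [gapCoeff]

lemma gapCoeff_identity (k x : ℝ) :
    -2 * (gapCoeff k (x - 1) * gapCoeff k (x - 1)) + 4 * (gapCoeff k x * gapCoeff k x)
      - 2 * (gapCoeff k (x + 1) * gapCoeff k (x + 1))
      - gapCoeff k x * gapCoeff k (x + 1) + gapCoeff k (x - 1) * gapCoeff k (x - 2)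
      - gapCoeff k x * gapCoeff k (x - 1) + gapCoeff k (x + 1) * gapCoeff k (x + 2) = 1 := by
  unfold gapCoeff; ring

lemma hasDerivAt_eta0 (k i : ℕ) {t : ℝ} (ht : t ≠ 0) :
    HasDerivAt (eta0 k i) (1 / (2 * Real.sqrt 2 * t)) t := by
  have hlog := ((hasDerivAt_id t).const_mul 1152).log (mul_ne_zero (by norm_num) ht)
  refine ((hlog.const_mul (1 / (2 * Real.sqrt 2))).sub_const
    (1 / Real.sqrt 2 * Real.log (gapCoeff k i))).congr_deriv ?_
  simp only [id]
  field_simp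

lemma neg_sqrt_two_mul_eta0 (k i : ℕ) (t : ℝ) :
    -Real.sqrt 2 * eta0 k i t = Real.log (gapCoeff k i) - Real.log (1152 * t) / 2 := by
  unfold eta0 gapCoeff
  field_simp
  ring

lemma exp_neg_sqrt_two_mul_eta0_add {k j j' : ℕ} {t : ℝ} (ht : 0 < t)
    (hj : 0 < gapCoeff k j) (hj' : 0 < gapCoeff k j') :
    Real.exp (-Real.sqrt 2 * (eta0 k j t + eta0 k j' t)) =
      gapCoeff k j * gapCoeff k j' / (1152 * t) := by
  have h : -Real.sqrt 2 * (eta0 k j t + eta0 k j' t) =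
      Real.log (gapCoeff k j) + Real.log (gapCoeff k j') - Real.log (1152 * t) := by
    linear_combination neg_sqrt_two_mul_eta0 k j t + neg_sqrt_two_mul_eta0 k j' t
  rw [h, Real.exp_sub, Real.exp_add, Real.exp_log hj, Real.exp_log hj',
    Real.exp_log (by positivity)]

lemma ite_exp_neg_sqrt_two_mul_eta0_add {P : Prop} [Decidable P] {k j j' : ℕ} {t : ℝ}
    (ht : 0 < t) (hP : P → 2 ≤ j ∧ j ≤ k ∧ 2 ≤ j' ∧ j' ≤ k)
    (hnP : ¬P → j = 1 ∨ j' = 1 ∨ j = k + 1 ∨ j' = k + 1) :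
    (if P then Real.exp (-Real.sqrt 2 * (eta0 k j t + eta0 k j' t)) else 0) =
      gapCoeff k j * gapCoeff k j' / (1152 * t) := by
  by_cases h : P
  · obtain ⟨hj1, hjk, hj'1, hj'k⟩ := hP h
    rw [if_pos h, exp_neg_sqrt_two_mul_eta0_add ht (gapCoeff_natCast_pos hj1 hjk)
      (gapCoeff_natCast_pos hj'1 hj'k)]
  · rw [if_neg h]
    rcases hnP h with rfl | rfl | rfl | rfl <;>
      simp [gapCoeff_one, gapCoeff_add_one_self]

theorem eta0_solves_gap_system_general (k : ℕ) (t : ℝ) (ht : 0 < t)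
    (i : ℕ) (hi2 : 2 ≤ i) (hik : i ≤ k) :
    (2 * Real.sqrt 2 / 3) * deriv (eta0 k i) t =
      384 *
        (-2 * (if 2 ≤ i - 1 ∧ i - 1 ≤ k then
              Real.exp (-(2 * Real.sqrt 2) * eta0 k (i - 1) t) else 0)
          + 4 * Real.exp (-(2 * Real.sqrt 2) * eta0 k i t)
          - 2 * (if i + 1 ≤ k then Real.exp (-(2 * Real.sqrt 2) * eta0 k (i + 1) t) else 0)
          - (if i + 1 ≤ k then
              Real.exp (-(Real.sqrt 2) * (eta0 k i t + eta0 k (i + 1) t)) else 0)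
          + (if 2 ≤ i - 2 then
              Real.exp (-(Real.sqrt 2) * (eta0 k (i - 1) t + eta0 k (i - 2) t)) else 0)
          - (if 2 ≤ i - 1 then
              Real.exp (-(Real.sqrt 2) * (eta0 k i t + eta0 k (i - 1) t)) else 0)
          + (if i + 2 ≤ k then
              Real.exp (-(Real.sqrt 2) * (eta0 k (i + 1) t + eta0 k (i + 2) t)) else 0)) := by
  have hdouble (x : ℝ) : -(2 * Real.sqrt 2) * x = -Real.sqrt 2 * (x + x) := by ring
  simp only [hdouble]
  rw [(hasDerivAt_eta0 k i ht.ne').deriv,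
    exp_neg_sqrt_two_mul_eta0_add ht (gapCoeff_natCast_pos hi2 hik) (gapCoeff_natCast_pos hi2 hik)]
  iterate 6 rw [ite_exp_neg_sqrt_two_mul_eta0_add ht (by omega) (by omega)]
  have hlhs : 2 * Real.sqrt 2 / 3 * (1 / (2 * Real.sqrt 2 * t)) = 384 / (1152 * t) := by
    field_simp
    norm_num
  push_cast [Nat.cast_sub (by omega : 1 ≤ i), Nat.cast_sub hi2]
  rw [hlhs]
  linear_combination (-384 / (1152 * t)) * gapCoeff_identity k i

/-- The explicit gaps `η_i` solve the system obtained from the Toda system by taking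
differences, where every term containing an `η_j` with `j ∉ {2,…,k}` is replaced by `0`. -/
theorem eta0_solves_gap_system (k : ℕ) (hk : 2 ≤ k) (t : ℝ) (ht : 0 < t)
    (i : ℕ) (hi2 : 2 ≤ i) (hik : i ≤ k) :
    (2 * Real.sqrt 2 / 3) * deriv (eta0 k i) t =
      384 *
        (-2 * (if 2 ≤ i - 1 ∧ i - 1 ≤ k then
              Real.exp (-(2 * Real.sqrt 2) * eta0 k (i - 1) t) else 0)
          + 4 * Real.exp (-(2 * Real.sqrt 2) * eta0 k i t)
          - 2 * (if i + 1 ≤ k then Real.exp (-(2 * Real.sqrt 2) * eta0 k (i + 1) t) else 0)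
          - (if i + 1 ≤ k then
              Real.exp (-(Real.sqrt 2) * (eta0 k i t + eta0 k (i + 1) t)) else 0)
          + (if 2 ≤ i - 2 then
              Real.exp (-(Real.sqrt 2) * (eta0 k (i - 1) t + eta0 k (i - 2) t)) else 0)
          - (if 2 ≤ i - 1 then
              Real.exp (-(Real.sqrt 2) * (eta0 k i t + eta0 k (i - 1) t)) else 0)
          + (if i + 2 ≤ k then
              Real.exp (-(Real.sqrt 2) * (eta0 k (i + 1) t + eta0 k (i + 2) t)) else 0)) :=
  eta0_solves_gap_system_general k t ht i hi2 hik
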